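/- Let E1 be the polynomial F2-algebra on generators h_{ij} for i ≥ 1, j ≥ 0, with differential (derivation) d(h_{ij}) = Σ_{0<k<i} h_{kj}·h_{i−k, j+k}. Define primed classes in a localization inverting h_{11} (written h1): h'_{n0} = h_{n0} + h1^{-1}·h_{20}·h_{n−1,1} for n ≥ 3. Then d(h'_{n0}) = Σ_{j=3}^{n−1} h_{n−j,j}·h'_{j0} modulo the ideal generated by h1-multiples of classes involving columns 1 and 2; concretely, in the localized algebra E1[h1^{-1}] with the induced derivation, d(h'_{n0}) = Σ_{j=3}^{n−1} h_{n−j,j}·h'_{j0} + h1·(an element of the subalgebra F1 generated by h_{10}, h_{20}, the h_{n1} (n ≥ 2), and the h'_{n2}). -/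

import Mathlib

/-!
The correction term of `h'_{n0}` is built so that its differential cancels the two low terms of
`d(h_{n0})`: since `d(h_{20}) = h_{10}·h₁` and `d(h_{n−1,1}) = h₁·h_{n−2,2} + …`, differentiating
`h₁⁻¹·h_{20}·h_{n−1,1}` yields `h_{10}·h_{n−1,1} + h_{20}·h_{n−2,2}` again, which vanishes in
characteristic 2 against the same terms of `d(h_{n0})`. What remains of both differentials
regroups, term by term, into `Σ_{j=3}^{n−1} h_{n−j,j}·h'_{j0}`, so the `F₁`-error is zero.
-/

open MvPolynomial

noncomputable section

/-- `L = F2[h₁^{±1}]`. -/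
def L : Type := LaurentPolynomial (ZMod 2)

instance : CommRing L := inferInstanceAs (CommRing (LaurentPolynomial (ZMod 2)))

/-- The invertible element `h₁`. -/
def h1 : L := LaurentPolynomial.T 1
/-- Its inverse `h₁⁻¹`. -/
def h1inv : L := LaurentPolynomial.T (-1)

/-- Index type for the generators `h_{ij}` other than the inverted `h₁ = h_{11}`. -/
abbrev σ : Type := {p : ℕ × ℕ // p ≠ (1, 1)}

/-- The localized May `E₁`-page `E₁[h₁^{-1}]`, modeled as a polynomial algebra
over `F2[h₁^{±1}]` on the generators `h_{ij}` with `(i,j) ≠ (1,1)`. -/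
abbrev E : Type := MvPolynomial σ L

/-- The generator `h_{ij}`, where `h_{11} = h₁` is the invertible scalar. -/
def H : ℕ × ℕ → E := fun p => if hp : p = (1, 1) then C h1 else X ⟨p, hp⟩

/-- The May `d₁` differential: `d(h_{ij}) = Σ_{0<k<i} h_{kj}·h_{i−k,j+k}`. -/
noncomputable def d : Derivation L E E :=
  MvPolynomial.mkDerivation L
    (fun q : σ => ∑ k ∈ Finset.Ioo 0 q.1.1, H (k, q.1.2) * H (q.1.1 - k, q.1.2 + k))

/-- `h'_{n0} = h_{n0} + h₁^{-1}·h_{20}·h_{n−1,1}`. -/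
def Hp0 (n : ℕ) : E := H (n, 0) + C h1inv * (H (2, 0) * H (n - 1, 1))

/-- `h'_{n2} = h_{n2} + h₁^{-1}·Σ_{k=2}^{n−1} h_{k1}·h_{n−k,k}`. -/
def Hp2 (n : ℕ) : E :=
  H (n, 2) + C h1inv * ∑ k ∈ Finset.Icc 2 (n - 1), H (k, 1) * H (n - k, k)

/-- The subalgebra `F₁` generated over `F2[h₁^{±1}]` by `h_{10}`, `h_{20}`,
the `h_{n1}` (`n ≥ 2`) and the `h'_{n2}` (`n ≥ 1`). -/
def F1 : Subalgebra L E :=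
  Algebra.adjoin L
    ({H (1, 0), H (2, 0)} ∪ (Set.range fun n : ℕ => H (n + 2, 1)) ∪
      (Set.range fun n : ℕ => Hp2 (n + 1)))

open Finset

instance : CharP L 2 :=
  (charP_of_injective_algebraMap' (ZMod 2) 2 : CharP (LaurentPolynomial (ZMod 2)) 2)

lemma h1inv_mul_h1 : h1inv * h1 = 1 :=
  (LaurentPolynomial.T_add (R := ZMod 2) (-1) 1).symm.trans
    (by rw [neg_add_cancel, LaurentPolynomial.T_zero]; rfl)

lemma H_one_one : H (1, 1) = C h1 := dif_pos rfl

lemma d_C_mul (a : L) (p : E) : d (C a * p) = C a * d p := by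
  rw [C_mul', d.map_smul, smul_eq_C_mul]

lemma d_H {i j : ℕ} (h : (i, j) ≠ (1, 1)) :
    d (H (i, j)) = ∑ k ∈ Ico 1 i, H (k, j) * H (i - k, j + k) := by
  rw [H, dif_neg h, d, mkDerivation_X]
  dsimp only
  rw [← Ico_add_one_left_eq_Ioo, zero_add]

lemma d_H_two_zero : d (H (2, 0)) = H (1, 0) * C h1 := by
  rw [d_H (by decide), show Ico 1 2 = {1} from rfl, sum_singleton, ← H_one_one]

lemma d_H_n_zero {n : ℕ} (hn : 3 ≤ n) :
    d (H (n, 0)) = H (1, 0) * H (n - 1, 1) + H (2, 0) * H (n - 2, 2) +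
      ∑ k ∈ Ico 3 n, H (k, 0) * H (n - k, k) := by
  rw [d_H (by simp), sum_eq_sum_Ico_succ_bot (by omega : 1 < n),
    sum_eq_sum_Ico_succ_bot (by omega : 2 < n), add_assoc]
  simp only [zero_add]

lemma d_H_pred_one {n : ℕ} (hn : 3 ≤ n) :
    d (H (n - 1, 1)) = C h1 * H (n - 2, 2) + ∑ j ∈ Ico 3 n, H (j - 1, 1) * H (n - j, j) := by
  rw [d_H (by simp; omega), sum_eq_sum_Ico_succ_bot (by omega : 1 < n - 1), H_one_one,
    show n - 1 - 1 = n - 2 by omega]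
  congr 1
  rw [show Ico 3 n = Ico (2 + 1) (n - 1 + 1) by congr 1; omega, ← sum_Ico_add']
  refine sum_congr rfl fun k _ => ?_
  rw [Nat.add_sub_cancel, show n - 1 - k = n - (k + 1) by omega, add_comm 1 k]

lemma sum_H_mul_Hp0 (n : ℕ) :
    ∑ j ∈ Ico 3 n, H (n - j, j) * Hp0 j = ∑ j ∈ Ico 3 n, H (j, 0) * H (n - j, j) +
      C h1inv * (H (2, 0) * ∑ j ∈ Ico 3 n, H (j - 1, 1) * H (n - j, j)) := by
  rw [mul_sum, mul_sum, ← sum_add_distrib]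
  refine sum_congr rfl fun j _ => ?_
  rw [Hp0]
  ring

theorem d_Hp0 {n : ℕ} (hn : 3 ≤ n) : d (Hp0 n) = ∑ j ∈ Ico 3 n, H (n - j, j) * Hp0 j := by
  have hC : C h1inv * C h1 = (1 : E) := by rw [← map_mul, h1inv_mul_h1, map_one]
  rw [sum_H_mul_Hp0, Hp0, map_add, d_C_mul, d.leibniz, smul_eq_mul, smul_eq_mul,
    d_H_n_zero hn, d_H_pred_one hn, d_H_two_zero]
  linear_combination (H (1, 0) * H (n - 1, 1) + H (2, 0) * H (n - 2, 2)) *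
    (hC + (CharTwo.two_eq_zero : (2 : E) = 0))

/-- for `n ≥ 3`,
`d(h'_{n0}) = Σ_{j=3}^{n−1} h_{n−j,j}·h'_{j0} + h₁·(an element of F₁)`
in the `h₁`-localized May `E₁`-page. -/
theorem stmt10 (n : ℕ) (hn : 3 ≤ n) :
    ∃ w ∈ F1,
      d (Hp0 n) = (∑ j ∈ Finset.Icc 3 (n - 1), H (n - j, j) * Hp0 j) + C h1 * w := by
  refine ⟨0, zero_mem _, ?_⟩
  rw [mul_zero, add_zero, ← Ico_add_one_right_eq_Icc, Nat.sub_add_cancel (by omega), d_Hp0 hn]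

end
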